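/- Let Ω ⊂ ℝⁿ be a bounded domain with |Ω| > 0, let C > 0, λ ≥ 2, q ∈ (1,∞), and let f : Ω → [0,∞] be measurable with f^q integrable. If ⨍_Ω f dx ≥ 2C and (⨍_Ω f^q dx)^{1/q} ≤ λ C, then |{x ∈ Ω : f(x) > C}| ≥ λ^{−q/(q−1)} |Ω|. -/

import Mathlib

open MeasureTheory Metric Set RealInnerProductSpace

noncomputable section

/-- Euclidean space ℝⁿ. -/
abbrev Rn (n : ℕ) := EuclideanSpace ℝ (Fin n)

/-- Divergence of a vector field on ℝⁿ. -/
def pdiv {n : ℕ} (ψ : Rn n → Rn n) (x : Rn n) : ℝ :=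
  ∑ i, fderiv ℝ ψ x (EuclideanSpace.single i 1) i

/-- Spatial gradient of a smooth function on space-time. -/
def sgrad {n : ℕ} (φ : Rn n × ℝ → ℝ) (p : Rn n × ℝ) : Rn n :=
  (EuclideanSpace.equiv (Fin n) ℝ).symm fun i => fderiv ℝ φ p (EuclideanSpace.single i 1, 0)

/-- Time derivative of a smooth function on space-time. -/
def tderiv {n : ℕ} (φ : Rn n × ℝ → ℝ) (p : Rn n × ℝ) : ℝ :=
  fderiv ℝ φ p (0, 1)

/-- Gradient of a smooth function on space. -/
def sgradS {n : ℕ} (ζ : Rn n → ℝ) (x : Rn n) : Rn n :=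
  (EuclideanSpace.equiv (Fin n) ℝ).symm fun i => fderiv ℝ ζ x (EuclideanSpace.single i 1)

/-- `gv` is the weak spatial gradient of `v` on `Ω`, for a.e. time `t ∈ (t₁,t₂)`:
integration by parts against smooth compactly supported vector fields. -/
def IsWeakSpatialGradient {n : ℕ} (Ω : Set (Rn n)) (t₁ t₂ : ℝ)
    (v : Rn n → ℝ → ℝ) (gv : Rn n → ℝ → Rn n) : Prop :=
  ∀ᵐ t ∂(volume.restrict (Ioo t₁ t₂)),
    ∀ ψ : Rn n → Rn n, ContDiff ℝ (⊤ : ℕ∞) ψ → HasCompactSupport ψ → tsupport ψ ⊆ Ω →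
      ∫ x in Ω, v x t * pdiv ψ x = - ∫ x in Ω, ⟪gv x t, ψ x⟫

/-- `u` is a weak supersolution of the porous medium equation `∂ₜ u − Δ(u^m) = 0`
on `Ω × (t₁,t₂)`, with `gu` the weak spatial gradient of `u` and
`gum` the weak spatial gradient of `u^m`. -/
structure IsWeakSupersolutionPME {n : ℕ} (m : ℝ) (Ω : Set (Rn n)) (t₁ t₂ : ℝ)
    (u : Rn n → ℝ → ℝ) (gu gum : Rn n → ℝ → Rn n) : Prop where
  meas_u : Measurable (Function.uncurry u)
  meas_gu : Measurable (Function.uncurry gu)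
  meas_gum : Measurable (Function.uncurry gum)
  locint : LocallyIntegrableOn
      (fun p : Rn n × ℝ => (u p.1 p.2) ^ 2 + ‖gu p.1 p.2‖ ^ 2
        + (u p.1 p.2 ^ m) ^ 2 + ‖gum p.1 p.2‖ ^ 2)
      (Ω ×ˢ Ioo t₁ t₂) volume
  grad_u : IsWeakSpatialGradient Ω t₁ t₂ u gu
  grad_um : IsWeakSpatialGradient Ω t₁ t₂ (fun x t => u x t ^ m) gum
  supersol : ∀ φ : Rn n × ℝ → ℝ, ContDiff ℝ (⊤ : ℕ∞) φ → HasCompactSupport φ →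
      tsupport φ ⊆ Ω ×ˢ Ioo t₁ t₂ → (∀ p, 0 ≤ φ p) →
      0 ≤ ∫ p in Ω ×ˢ Ioo t₁ t₂,
            (-(u p.1 p.2) * tderiv φ p + ⟪gum p.1 p.2, sgrad φ p⟫)

/-- **Simple measure lemma** (Lemma 4.5): let `Ω ⊂ ℝⁿ` be a bounded domain with
`|Ω| > 0`, `C > 0`, `λ ≥ 2`, `q ∈ (1,∞)` and `f ≥ 0` measurable with `f^q`
integrable. If `⨍_Ω f ≥ 2C` and `(⨍_Ω f^q)^{1/q} ≤ λC`, then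
`|{x ∈ Ω : f(x) > C}| ≥ λ^{−q/(q−1)} |Ω|`. -/
theorem simple_measure_lemma (n : ℕ) (Ω : Set (Rn n))
    (hΩo : IsOpen Ω) (hΩb : Bornology.IsBounded Ω) (hΩne : volume Ω ≠ 0)
    (C lam q : ℝ) (hC : 0 < C) (hlam : 2 ≤ lam) (hq : 1 < q)
    (f : Rn n → ℝ) (hfm : Measurable f) (hf0 : ∀ x, 0 ≤ f x)
    (hint : IntegrableOn (fun x => f x ^ q) Ω volume)
    (havg : 2 * C ≤ ⨍ x in Ω, f x)
    (havgq : (⨍ x in Ω, f x ^ q) ^ (1 / q) ≤ lam * C) :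
    ENNReal.ofReal (lam ^ (-(q / (q - 1)))) * volume Ω ≤
      volume {x ∈ Ω | C < f x} := by
    classical
  have hΩm : MeasurableSet Ω := hΩo.measurableSet
  have hΩfin : volume Ω < ⊤ := hΩb.measure_lt_top
  set V : ℝ := (volume Ω).toReal with hV
  have hVpos : 0 < V := ENNReal.toReal_pos hΩne hΩfin.ne
  set E : Set (Rn n) := {x ∈ Ω | C < f x} with hEdef
  have hEsub : E ⊆ Ω := fun x hx => hx.1
  have hEm : MeasurableSet E := hΩm.inter (measurableSet_lt measurable_const hfm)
  have hEfin : volume E ≠ ⊤ := (lt_of_le_of_lt (measure_mono hEsub) hΩfin).ne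
  set W : ℝ := (volume E).toReal with hWdef
  have hWnn : 0 ≤ W := ENNReal.toReal_nonneg
  have hq0 : 0 < q := lt_trans one_pos hq
  have hlam0 : 0 < lam := lt_of_lt_of_le two_pos hlam
  set p : ℝ := q / (q - 1) with hpdef
  have hpq : q.HolderConjugate p := Real.HolderConjugate.conjExponent hq
  have hppos : 0 < p := hpq.symm.pos
  -- integrability of f on Ω
  have hintf : IntegrableOn f Ω volume := by
    have h1 : IntegrableOn (fun x => 1 + f x ^ q) Ω volume :=
      (integrableOn_const hΩfin.ne).add hint
    refine h1.mono' hfm.aestronglyMeasurable ?_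
    filter_upwards with x
    rw [Real.norm_of_nonneg (hf0 x)]
    rcases le_or_gt (f x) 1 with h | h
    · have := Real.rpow_nonneg (hf0 x) q; linarith
    · have h2 : f x ^ (1:ℝ) ≤ f x ^ q :=
        Real.rpow_le_rpow_of_exponent_le h.le hq.le
      rw [Real.rpow_one] at h2; linarith
  -- lower bound for the integral of f
  have hI1 : 2 * C * V ≤ ∫ x in Ω, f x := by
    rw [setAverage_eq, smul_eq_mul, ← div_eq_inv_mul, measureReal_def, ← hV, le_div_iff₀ hVpos] at havg
    exact havg
  -- upper bound for the integral of f^q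
  have hIqnn : 0 ≤ ∫ x in Ω, f x ^ q :=
    setIntegral_nonneg hΩm fun x _ => Real.rpow_nonneg (hf0 x) q
  have hAnn : (0:ℝ) ≤ ⨍ x in Ω, f x ^ q := by
    rw [setAverage_eq, smul_eq_mul]
    exact mul_nonneg (inv_nonneg.2 ENNReal.toReal_nonneg) hIqnn
  have hIq : ∫ x in Ω, f x ^ q ≤ (lam * C) ^ q * V := by
    have hA : (⨍ x in Ω, f x ^ q) ≤ (lam * C) ^ q := by
      have h2 : ((⨍ x in Ω, f x ^ q) ^ (1/q)) ^ q ≤ (lam * C) ^ q :=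
        Real.rpow_le_rpow (Real.rpow_nonneg hAnn _) havgq hq0.le
      rwa [← Real.rpow_mul hAnn, one_div, inv_mul_cancel₀ hq0.ne', Real.rpow_one] at h2
    rw [setAverage_eq, smul_eq_mul, ← div_eq_inv_mul, measureReal_def, ← hV, div_le_iff₀ hVpos] at hA
    exact hA
  -- splitting
  have hsplit : (∫ x in E, f x) + ∫ x in Ω \ E, f x = ∫ x in Ω, f x := by
    have := integral_inter_add_diff (f := f) (s := Ω) (t := E) hEm hintf
    rwa [Set.inter_eq_self_of_subset_right hEsub] at this
  have hcomp : ∫ x in Ω \ E, f x ≤ C * V := by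
    have h1 : ∫ x in Ω \ E, f x ≤ ∫ x in Ω \ E, C := by
      refine setIntegral_mono_on (hintf.mono_set Set.diff_subset)
        (integrableOn_const (lt_of_le_of_lt (measure_mono Set.diff_subset) hΩfin).ne)
        (hΩm.diff hEm) fun x hx => ?_
      by_contra h
      exact hx.2 ⟨hx.1, lt_of_not_ge h⟩
    have h2 : ∫ x in Ω \ E, (C:ℝ) = (volume (Ω \ E)).toReal * C := by
      simp [setIntegral_const, smul_eq_mul, measureReal_def]
    have h3 : (volume (Ω \ E)).toReal ≤ V :=
      ENNReal.toReal_mono hΩfin.ne (measure_mono Set.diff_subset)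
    calc ∫ x in Ω \ E, f x ≤ (volume (Ω \ E)).toReal * C := by rw [← h2]; exact h1
      _ ≤ V * C := mul_le_mul_of_nonneg_right h3 hC.le
      _ = C * V := mul_comm _ _
  have hEI : C * V ≤ ∫ x in E, f x := by nlinarith
  -- Hölder on E
  have hfE : MemLp f (ENNReal.ofReal q) (volume.restrict E) := by
    have hne0 : ENNReal.ofReal q ≠ 0 := by
      simp [ENNReal.ofReal_eq_zero, not_le, hq0]
    have hdiv : ENNReal.ofReal q / ENNReal.ofReal q = 1 :=
      ENNReal.div_self hne0 ENNReal.ofReal_ne_top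
    refine (memLp_norm_rpow_iff hfm.aestronglyMeasurable hne0 ENNReal.ofReal_ne_top).1 ?_
    rw [hdiv, memLp_one_iff_integrable]
    have : (fun x => ‖f x‖ ^ (ENNReal.ofReal q).toReal) = fun x => f x ^ q := by
      funext x
      rw [ENNReal.toReal_ofReal hq0.le, Real.norm_of_nonneg (hf0 x)]
    rw [this]
    exact hint.mono_set hEsub
  haveI : IsFiniteMeasure (volume.restrict E) :=
    ⟨by rw [Measure.restrict_apply_univ]; exact lt_top_iff_ne_top.2 hEfin⟩
  have hgE : MemLp (fun _ => (1:ℝ)) (ENNReal.ofReal p) (volume.restrict E) :=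
    memLp_const 1
  have hHolder : ∫ x in E, f x ≤
      (∫ x in E, f x ^ q) ^ (1/q) * W ^ (1/p) := by
    have h := integral_mul_le_Lp_mul_Lq_of_nonneg (μ := volume.restrict E) hpq
      (Filter.Eventually.of_forall hf0) (Filter.Eventually.of_forall fun _ => zero_le_one)
      hfE hgE
    simp only [mul_one, Real.one_rpow] at h
    rwa [integral_const, measureReal_restrict_apply_univ, measureReal_def, smul_eq_mul, mul_one] at h
  -- combine
  have hEq : (∫ x in E, f x ^ q) ≤ (lam * C) ^ q * V := by
    refine le_trans ?_ hIq
    exact setIntegral_mono_set hint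
      (Filter.Eventually.of_forall fun x => Real.rpow_nonneg (hf0 x) q)
      (Filter.Eventually.of_forall hEsub)
  have hEqnn : 0 ≤ ∫ x in E, f x ^ q :=
    setIntegral_nonneg hEm fun x _ => Real.rpow_nonneg (hf0 x) q
  have hkey : C * V ≤ lam * C * V ^ (1/q) * W ^ (1/p) := by
    have h1 : (∫ x in E, f x ^ q) ^ (1/q) ≤ ((lam * C) ^ q * V) ^ (1/q) :=
      Real.rpow_le_rpow hEqnn hEq (by positivity)
    have h2 : ((lam * C) ^ q * V) ^ (1/q) = lam * C * V ^ (1/q) := by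
      rw [Real.mul_rpow (by positivity) hVpos.le, ← Real.rpow_mul (by positivity),
        mul_one_div, div_self hq0.ne', Real.rpow_one]
    calc C * V ≤ ∫ x in E, f x := hEI
      _ ≤ (∫ x in E, f x ^ q) ^ (1/q) * W ^ (1/p) := hHolder
      _ ≤ lam * C * V ^ (1/q) * W ^ (1/p) := by
          rw [← h2]
          exact mul_le_mul_of_nonneg_right h1 (Real.rpow_nonneg hWnn _)
  -- deduce V ≤ lam ^ p * W
  have hVW : V ≤ lam ^ p * W := by
    have hV1 : V = V ^ (1/q) * V ^ (1/p) := by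
      rw [← Real.rpow_add hVpos, one_div, one_div, hpq.inv_add_inv_eq_one, Real.rpow_one]
    have h3 : V ^ (1/p) ≤ lam * W ^ (1/p) := by
      have h4 : V ^ (1/q) * V ^ (1/p) ≤ V ^ (1/q) * (lam * W ^ (1/p)) := by
        rw [← hV1]
        calc V ≤ lam * C * V ^ (1/q) * W ^ (1/p) / C := by
              rw [le_div_iff₀ hC]; linarith [hkey]
          _ = V ^ (1/q) * (lam * W ^ (1/p)) := by field_simp
      exact le_of_mul_le_mul_left h4 (Real.rpow_pos_of_pos hVpos _)
    have h5 : V ^ (1/p) ≤ (lam ^ p * W) ^ (1/p) := by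
      rw [Real.mul_rpow (by positivity) hWnn, ← Real.rpow_mul hlam0.le,
        mul_one_div, div_self hppos.ne', Real.rpow_one]
      exact h3
    have := (Real.rpow_le_rpow_iff hVpos.le (by positivity) (by positivity)).1 h5
    exact this
  -- conclude in ENNReal
  have hfinal : lam ^ (-(q / (q-1))) * V ≤ W := by
    rw [Real.rpow_neg hlam0.le, ← hpdef]
    rw [inv_mul_le_iff₀ (Real.rpow_pos_of_pos hlam0 p)]
    linarith [hVW]
  calc ENNReal.ofReal (lam ^ (-(q / (q - 1)))) * volume Ω
      = ENNReal.ofReal (lam ^ (-(q / (q - 1)))) * ENNReal.ofReal V := by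
        rw [hV, ENNReal.ofReal_toReal hΩfin.ne]
    _ = ENNReal.ofReal (lam ^ (-(q / (q - 1))) * V) := by
        rw [ENNReal.ofReal_mul (Real.rpow_nonneg hlam0.le _)]
    _ ≤ ENNReal.ofReal W := ENNReal.ofReal_le_ofReal hfinal
    _ = volume E := by rw [hWdef, ENNReal.ofReal_toReal hEfin]
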